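/- (Uniqueness theorem) Let X = {x ∈ ℝⁿ : x_i ≥ 0 for all i}, λ > 0, and J(x) = (1/2)‖Kx − y‖₂² + λ‖Dx‖_{2,1}. Let x₁ ∈ X minimize J over X and assume: (i) there exists z ∈ ℝ^m such that DᵀD̂x₁ = Kᵀz, where Dᵀ(p,q) = Dhᵀp + Dvᵀq; (ii) ker(K) ∩ S₁ = {0}, where S₁ = {v ∈ ℝⁿ : |Dv|_i = 0 for all i with |Dx₁|_i = 0}. Then x₁ is the unique minimizer of J over X: every x₂ ∈ X minimizing J over X satisfies x₂ = x₁. -/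

import Mathlib

/-!
The data term is strictly convex in `Kx`, so evaluating `J` at the midpoint of two minimizers
forces `Kx₁ = Kx₂`; equal values of `J` then give `‖Dx₁‖_{2,1} = ‖Dx₂‖_{2,1}`.
The certificate `DᵀD̂x₁ = Kᵀz` makes `Σᵢ ⟨(D̂x₁)ᵢ, (Dx)ᵢ⟩ = ⟨z, Kx⟩` depend on `x` only
through `Kx`, so `Σᵢ ⟨(D̂x₁)ᵢ, (Dx₂)ᵢ⟩ = ‖Dx₁‖_{2,1} = ‖Dx₂‖_{2,1}`. Each term is at most
`|Dx₂|ᵢ`, hence equality holds pixelwise; where `|Dx₁|ᵢ = 0` the vector `(D̂x₁)ᵢ = (1/2, 1/2)`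
has length `< 1`, which forces `(Dx₂)ᵢ = 0`. Thus `x₂ - x₁ ∈ ker K ∩ S₁ = {0}`.
-/

open Matrix Finset

/-- Gradient magnitude: `|Dx|_i = sqrt((Dh x)_i² + (Dv x)_i²)`. -/
noncomputable def gMag {n : ℕ} (Dh Dv : Matrix (Fin n) (Fin n) ℝ)
    (x : Fin n → ℝ) (i : Fin n) : ℝ :=
  Real.sqrt ((Dh.mulVec x i) ^ 2 + (Dv.mulVec x i) ^ 2)

/-- Horizontal component of the normalized gradient `D̂x`. -/
noncomputable def nGradH {n : ℕ} (Dh Dv : Matrix (Fin n) (Fin n) ℝ)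
    (x : Fin n → ℝ) (i : Fin n) : ℝ :=
  if gMag Dh Dv x i = 0 then 1 / 2 else Dh.mulVec x i / gMag Dh Dv x i

/-- Vertical component of the normalized gradient `D̂x`. -/
noncomputable def nGradV {n : ℕ} (Dh Dv : Matrix (Fin n) (Fin n) ℝ)
    (x : Fin n → ℝ) (i : Fin n) : ℝ :=
  if gMag Dh Dv x i = 0 then 1 / 2 else Dv.mulVec x i / gMag Dh Dv x i

/-- `S₁ = {v ∈ ℝⁿ : |Dv|_i = 0 for all i with |Dx₁|_i = 0}`. -/
def S1 {n : ℕ} (Dh Dv : Matrix (Fin n) (Fin n) ℝ) (x₁ : Fin n → ℝ) :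
    Set (Fin n → ℝ) :=
  {v | ∀ i, gMag Dh Dv x₁ i = 0 → gMag Dh Dv v i = 0}

lemma mul_add_mul_le_sqrt_mul_sqrt (a b c d : ℝ) :
    a * c + b * d ≤ √(a ^ 2 + b ^ 2) * √(c ^ 2 + d ^ 2) := by
  rw [← Real.sqrt_mul (by positivity)]
  exact (le_abs_self _).trans (Real.abs_le_sqrt (by nlinarith [sq_nonneg (a * d - b * c)]))

lemma sqrt_add_sq_add_sq_le (a b c d : ℝ) :
    √((a + c) ^ 2 + (b + d) ^ 2) ≤ √(a ^ 2 + b ^ 2) + √(c ^ 2 + d ^ 2) := by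
  rw [Real.sqrt_le_iff]
  refine ⟨by positivity, ?_⟩
  nlinarith [mul_add_mul_le_sqrt_mul_sqrt a b c d, Real.sq_sqrt (by positivity : 0 ≤ a ^ 2 + b ^ 2),
    Real.sq_sqrt (by positivity : 0 ≤ c ^ 2 + d ^ 2)]

lemma half_add_half_le_sqrt (a b : ℝ) : 1 / 2 * a + 1 / 2 * b ≤ √(a ^ 2 + b ^ 2) :=
  (le_abs_self _).trans (Real.abs_le_sqrt (by nlinarith [sq_nonneg (a - b), sq_nonneg (a + b)]))

lemma eq_zero_of_half_add_half_eq_sqrt {a b : ℝ} (h : 1 / 2 * a + 1 / 2 * b = √(a ^ 2 + b ^ 2)) :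
    a = 0 ∧ b = 0 := by
  have hsq : (1 / 2 * a + 1 / 2 * b) ^ 2 = a ^ 2 + b ^ 2 := by
    rw [h, Real.sq_sqrt (by positivity)]
  constructor <;> nlinarith [sq_nonneg (a - b), sq_nonneg a, sq_nonneg b]

lemma sum_convex_comb_sq {ι : Type*} [Fintype ι] {a b : ℝ} (hab : a + b = 1) (u w : ι → ℝ) :
    ∑ i, (a * u i + b * w i) ^ 2 + a * b * ∑ i, (u i - w i) ^ 2
      = a * ∑ i, u i ^ 2 + b * ∑ i, w i ^ 2 := by
  simp only [mul_sum, ← sum_add_distrib]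
  refine sum_congr rfl fun i _ => ?_
  linear_combination (a * u i ^ 2 + b * w i ^ 2) * hab

section Gradient

variable {n : ℕ} {Dh Dv : Matrix (Fin n) (Fin n) ℝ}

lemma gMag_nonneg (x : Fin n → ℝ) (i : Fin n) : 0 ≤ gMag Dh Dv x i :=
  Real.sqrt_nonneg _

lemma gMag_sq (x : Fin n → ℝ) (i : Fin n) :
    gMag Dh Dv x i ^ 2 = (Dh *ᵥ x) i ^ 2 + (Dv *ᵥ x) i ^ 2 :=
  Real.sq_sqrt (by positivity)

lemma gMag_eq_zero_iff {x : Fin n → ℝ} {i : Fin n} :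
    gMag Dh Dv x i = 0 ↔ (Dh *ᵥ x) i = 0 ∧ (Dv *ᵥ x) i = 0 := by
  rw [gMag, Real.sqrt_eq_zero (by positivity),
    add_eq_zero_iff_of_nonneg (sq_nonneg _) (sq_nonneg _), sq_eq_zero_iff, sq_eq_zero_iff]

lemma gMag_add_le (x y : Fin n → ℝ) (i : Fin n) :
    gMag Dh Dv (x + y) i ≤ gMag Dh Dv x i + gMag Dh Dv y i := by
  simp only [gMag, mulVec_add, Pi.add_apply]
  exact sqrt_add_sq_add_sq_le ..

lemma gMag_smul (c : ℝ) (x : Fin n → ℝ) (i : Fin n) :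
    gMag Dh Dv (c • x) i = |c| * gMag Dh Dv x i := by
  simp only [gMag, mulVec_smul, Pi.smul_apply, smul_eq_mul, mul_pow, ← mul_add]
  rw [Real.sqrt_mul' _ (by positivity), Real.sqrt_sq_eq_abs]

lemma gMag_convex_comb_le {a b : ℝ} (ha : 0 ≤ a) (hb : 0 ≤ b) (x y : Fin n → ℝ) (i : Fin n) :
    gMag Dh Dv (a • x + b • y) i ≤ a * gMag Dh Dv x i + b * gMag Dh Dv y i := by
  simpa only [gMag_smul, abs_of_nonneg ha, abs_of_nonneg hb] using gMag_add_le (a • x) (b • y) i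

lemma sub_mem_S1 {x₁ u v : Fin n → ℝ} (hu : u ∈ S1 Dh Dv x₁) (hv : v ∈ S1 Dh Dv x₁) :
    u - v ∈ S1 Dh Dv x₁ := by
  intro i hi
  obtain ⟨huh, huv⟩ := gMag_eq_zero_iff.mp (hu i hi)
  obtain ⟨hvh, hvv⟩ := gMag_eq_zero_iff.mp (hv i hi)
  simp [gMag_eq_zero_iff, mulVec_sub, huh, huv, hvh, hvv]

/-- `⟨(D̂x₁)ᵢ, (Dx)ᵢ⟩`. -/
noncomputable def nGradPairing (Dh Dv : Matrix (Fin n) (Fin n) ℝ) (x₁ x : Fin n → ℝ)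
    (i : Fin n) : ℝ :=
  nGradH Dh Dv x₁ i * (Dh *ᵥ x) i + nGradV Dh Dv x₁ i * (Dv *ᵥ x) i

lemma nGradPairing_self (x : Fin n → ℝ) (i : Fin n) :
    nGradPairing Dh Dv x x i = gMag Dh Dv x i := by
  by_cases hx : gMag Dh Dv x i = 0
  · obtain ⟨hh, hv⟩ := gMag_eq_zero_iff.mp hx
    simp [nGradPairing, hx, hh, hv]
  · simp only [nGradPairing, nGradH, nGradV, if_neg hx]
    field_simp
    exact (gMag_sq x i).symm

lemma nGradPairing_le (x₁ x : Fin n → ℝ) (i : Fin n) :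
    nGradPairing Dh Dv x₁ x i ≤ gMag Dh Dv x i := by
  by_cases hx₁ : gMag Dh Dv x₁ i = 0
  · simp only [nGradPairing, nGradH, nGradV, if_pos hx₁]
    exact half_add_half_le_sqrt _ _
  · have hpos : 0 < gMag Dh Dv x₁ i := (gMag_nonneg x₁ i).lt_of_ne' hx₁
    simp only [nGradPairing, nGradH, nGradV, if_neg hx₁, div_mul_eq_mul_div, ← add_div]
    rw [div_le_iff₀ hpos]
    calc _ = (Dh *ᵥ x₁) i * (Dh *ᵥ x) i + (Dv *ᵥ x₁) i * (Dv *ᵥ x) i := by ring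
      _ ≤ gMag Dh Dv x₁ i * gMag Dh Dv x i := mul_add_mul_le_sqrt_mul_sqrt _ _ _ _
      _ = _ := mul_comm _ _

lemma gMag_eq_zero_of_nGradPairing_eq {x₁ x : Fin n → ℝ} {i : Fin n} (hx₁ : gMag Dh Dv x₁ i = 0)
    (h : nGradPairing Dh Dv x₁ x i = gMag Dh Dv x i) : gMag Dh Dv x i = 0 := by
  simp only [nGradPairing, nGradH, nGradV, if_pos hx₁] at h
  exact gMag_eq_zero_iff.mpr (eq_zero_of_half_add_half_eq_sqrt h)

lemma sum_nGradPairing (x₁ x : Fin n → ℝ) :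
    ∑ i, nGradPairing Dh Dv x₁ x i
      = (Dhᵀ *ᵥ nGradH Dh Dv x₁ + Dvᵀ *ᵥ nGradV Dh Dv x₁) ⬝ᵥ x := by
  simp only [nGradPairing, sum_add_distrib, add_dotProduct, mulVec_transpose,
    ← dotProduct_mulVec]
  rfl

end Gradient

section Objective

variable {m n : ℕ} (K : Matrix (Fin m) (Fin n) ℝ) (y : Fin m → ℝ)
  (Dh Dv : Matrix (Fin n) (Fin n) ℝ) (lam : ℝ)

noncomputable def tvObjective (x : Fin n → ℝ) : ℝ :=
  1 / 2 * ∑ i, ((K *ᵥ x) i - y i) ^ 2 + lam * ∑ i, gMag Dh Dv x i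

variable {K y Dh Dv lam}

lemma tvObjective_convex_comb_add_le (hlam : 0 ≤ lam) {a b : ℝ} (ha : 0 ≤ a) (hb : 0 ≤ b)
    (hab : a + b = 1) (x₁ x₂ : Fin n → ℝ) :
    tvObjective K y Dh Dv lam (a • x₁ + b • x₂)
        + a * b / 2 * ∑ i, ((K *ᵥ x₁) i - (K *ᵥ x₂) i) ^ 2
      ≤ a * tvObjective K y Dh Dv lam x₁ + b * tvObjective K y Dh Dv lam x₂ := by
  have hdata := sum_convex_comb_sq hab (K *ᵥ x₁ - y) (K *ᵥ x₂ - y)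
  have hcomb : ∀ i, (K *ᵥ (a • x₁ + b • x₂)) i - y i
      = a * (K *ᵥ x₁ - y) i + b * (K *ᵥ x₂ - y) i := fun i => by
    simp only [mulVec_add, mulVec_smul, Pi.add_apply, Pi.smul_apply, Pi.sub_apply, smul_eq_mul]
    linear_combination y i * hab
  simp only [Pi.sub_apply, sub_sub_sub_cancel_right] at hdata
  have htv : ∑ i, gMag Dh Dv (a • x₁ + b • x₂) i
      ≤ a * ∑ i, gMag Dh Dv x₁ i + b * ∑ i, gMag Dh Dv x₂ i := by
    rw [mul_sum, mul_sum, ← sum_add_distrib]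
    exact sum_le_sum fun i _ => gMag_convex_comb_le ha hb x₁ x₂ i
  unfold tvObjective
  simp only [hcomb, Pi.sub_apply]
  linarith [mul_le_mul_of_nonneg_left htv hlam]

lemma mulVec_eq_and_sum_gMag_eq_of_isMinOn (hlam : 0 < lam) {S : Set (Fin n → ℝ)}
    (hS : Convex ℝ S) {x₁ x₂ : Fin n → ℝ} (hx₁ : x₁ ∈ S) (hx₂ : x₂ ∈ S)
    (h₁ : IsMinOn (tvObjective K y Dh Dv lam) S x₁)
    (h₂ : IsMinOn (tvObjective K y Dh Dv lam) S x₂) :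
    K *ᵥ x₁ = K *ᵥ x₂ ∧ ∑ i, gMag Dh Dv x₁ i = ∑ i, gMag Dh Dv x₂ i := by
  have heq := le_antisymm (isMinOn_iff.mp h₁ x₂ hx₂) (isMinOn_iff.mp h₂ x₁ hx₁)
  have hmid := tvObjective_convex_comb_add_le (K := K) (y := y) (Dh := Dh) (Dv := Dv) hlam.le
    (a := 1 / 2) (b := 1 / 2) (by norm_num) (by norm_num) (by norm_num) x₁ x₂
  have hle := isMinOn_iff.mp h₁ _ (hS hx₁ hx₂ (a := 1 / 2) (b := 1 / 2) (by norm_num) (by norm_num)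
    (by norm_num))
  have hsq : ∑ i, ((K *ᵥ x₁) i - (K *ᵥ x₂) i) ^ 2 = 0 :=
    le_antisymm (by nlinarith) (sum_nonneg fun i _ => sq_nonneg _)
  have hK : K *ᵥ x₁ = K *ᵥ x₂ := funext fun i =>
    sub_eq_zero.mp (pow_eq_zero_iff two_ne_zero |>.mp
      (congrFun ((Fintype.sum_eq_zero_iff_of_nonneg fun j => sq_nonneg _).mp hsq) i))
  refine ⟨hK, mul_left_cancel₀ hlam.ne' ?_⟩
  unfold tvObjective at heq
  rw [hK] at heq
  linarith

lemma mem_S1_of_dual_certificate {x₁ x₂ : Fin n → ℝ} {z : Fin m → ℝ}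
    (hz : Dhᵀ *ᵥ nGradH Dh Dv x₁ + Dvᵀ *ᵥ nGradV Dh Dv x₁ = Kᵀ *ᵥ z)
    (hK : K *ᵥ x₁ = K *ᵥ x₂) (hTV : ∑ i, gMag Dh Dv x₂ i ≤ ∑ i, gMag Dh Dv x₁ i) :
    x₂ ∈ S1 Dh Dv x₁ := by
  have hpair : ∑ i, nGradPairing Dh Dv x₁ x₂ i = ∑ i, nGradPairing Dh Dv x₁ x₁ i := by
    rw [sum_nGradPairing, sum_nGradPairing, hz, mulVec_transpose, ← dotProduct_mulVec,
      ← dotProduct_mulVec, hK]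
  have hsum : ∑ i, nGradPairing Dh Dv x₁ x₂ i = ∑ i, gMag Dh Dv x₂ i :=
    le_antisymm (sum_le_sum fun i _ => nGradPairing_le x₁ x₂ i)
      (by simpa only [hpair, nGradPairing_self] using hTV)
  intro i hi
  exact gMag_eq_zero_of_nGradPairing_eq hi
    ((sum_eq_sum_iff_of_le fun i _ => nGradPairing_le x₁ x₂ i).mp hsum i (mem_univ i))

end Objective

/-- Uniqueness theorem: if `x₁` minimizes
`J(x) = (1/2)‖Kx − y‖₂² + λ‖Dx‖_{2,1}` over the nonnegative orthant `X`, `λ > 0`,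
`DᵀD̂x₁ = Kᵀz` for some `z`, and `ker(K) ∩ S₁ = {0}`, then `x₁` is the unique minimizer
of `J` over `X`. -/
theorem stmt6 (m n : ℕ) (K : Matrix (Fin m) (Fin n) ℝ) (y : Fin m → ℝ)
    (Dh Dv : Matrix (Fin n) (Fin n) ℝ)
    (lam : ℝ) (hlam : 0 < lam)
    (X : Set (Fin n → ℝ)) (hX : X = {x | ∀ i, 0 ≤ x i})
    (J : (Fin n → ℝ) → ℝ)
    (hJ : ∀ x, J x = (1 / 2) * ∑ i, (K.mulVec x i - y i) ^ 2
        + lam * ∑ i, gMag Dh Dv x i)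
    (x₁ : Fin n → ℝ) (hx₁ : x₁ ∈ X) (hmin₁ : ∀ x ∈ X, J x₁ ≤ J x)
    (hz : ∃ z : Fin m → ℝ,
      Dhᵀ.mulVec (nGradH Dh Dv x₁) + Dvᵀ.mulVec (nGradV Dh Dv x₁) = Kᵀ.mulVec z)
    (hker : ∀ v ∈ S1 Dh Dv x₁, K.mulVec v = 0 → v = 0) :
    ∀ x₂ ∈ X, (∀ x ∈ X, J x₂ ≤ J x) → x₂ = x₁ := by
  intro x₂ hx₂ hmin₂
  obtain ⟨z, hz⟩ := hz
  obtain rfl : J = tvObjective K y Dh Dv lam := funext hJ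
  have hXconvex : Convex ℝ X := hX ▸ convex_Ici 0
  obtain ⟨hK, hTV⟩ := mulVec_eq_and_sum_gMag_eq_of_isMinOn hlam hXconvex hx₁ hx₂
    (isMinOn_iff.mpr hmin₁) (isMinOn_iff.mpr hmin₂)
  have hS1 : x₂ - x₁ ∈ S1 Dh Dv x₁ :=
    sub_mem_S1 (mem_S1_of_dual_certificate hz hK hTV.ge) fun _ => id
  exact sub_eq_zero.mp (hker _ hS1 (by rw [mulVec_sub, hK, sub_self]))
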